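/- Let x be a collision-free solution of the first-order singular Cucker–Smale system with β > 1 whose initial positions are strictly increasing: x_1(0) < x_2(0) < … < x_N(0), and define the critical coupling strength κ_c = max_{1 ≤ l ≤ N−1} ( −N(β−1)·Σ_{i=1}^l ν_i ) / ( l(N−l) ). If x exhibits mono-cluster flocking, i.e., for every pair of indices i, j the limit lim_{t→∞} |x_i(t) − x_j(t)| exists and is finite, then κ > κ_c. -/

import Mathlib

open Real Filter Set Topology

/-- The potential function `Φ(x) = sign(x)·(β−1)⁻¹(1 − |x|^{1−β})` (with `Φ(0)=0`). -/
noncomputable def PhiCS (β y : ℝ) : ℝ := Real.sign y * (1 - |y| ^ (1 - β)) / (β - 1)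

/-- A collision-free solution on `[0,∞)` of the first-order singular Cucker–Smale
system with short-range interaction:
`x_i'(t) = ν_i + (κ/N) Σ_{k≠i} Φ(x_k(t) − x_i(t))`, with `Σ_i x_i(0) = 0` and no
collisions for all `t ≥ 0`. -/
def IsCFSol (N : ℕ) (β κ : ℝ) (ν : Fin N → ℝ) (x : ℝ → Fin N → ℝ) : Prop :=
  (∀ t ≥ (0:ℝ), ∀ i j : Fin N, i ≠ j → x t i ≠ x t j) ∧
  (∑ i, x 0 i = 0) ∧
  ∀ i, ∀ t ≥ (0:ℝ), HasDerivWithinAt (fun s => x s i)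
    (ν i + (κ / (N:ℝ)) * ∑ k ∈ Finset.univ.erase i, PhiCS β (x t k - x t i)) (Set.Ici 0) t

/-- The critical coupling strength
`κ_c = max_{1 ≤ l ≤ N−1} (−N(β−1)·Σ_{i=1}^l ν_i)/(l(N−l))`. -/
noncomputable def kappaC (N : ℕ) (β : ℝ) (ν : Fin N → ℝ) : ℝ :=
  ⨆ l : Fin (N - 1),
    (-((N:ℝ) * (β - 1) * ∑ i : Fin N, if (i:ℕ) < (l:ℕ) + 1 then ν i else 0)) /
      ((((l:ℕ):ℝ) + 1) * ((N:ℝ) - (((l:ℕ):ℝ) + 1)))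

/-!
Trajectories cannot cross without colliding, so the initial order persists, and the centre of
mass stays at `0`; hence mono-cluster flocking makes every `x_i` converge. For a cut
`A = {1, …, l}` the sum `Σ_{i ∈ A} x_i` therefore converges, while its derivative is
`Σ_{i ∈ A} ν_i + (κ/N) Σ_{i ∈ A, k ∉ A} Φ(x_k − x_i)`. As the gaps `x_k − x_i` stay bounded,
each `Φ(x_k − x_i)` is eventually at most a constant strictly below `Φ^∞`, and a convergent
function cannot have its derivative eventually below a negative constant. Hence
`0 < Σ_{i ∈ A} ν_i + (κ/N) · l(N − l) Φ^∞`, i.e. `κ` exceeds the `l`-th term of `κ_c`.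
-/

open Finset

section Potential

variable {β : ℝ}

lemma PhiCS_neg (β y : ℝ) : PhiCS β (-y) = -PhiCS β y := by
  simp [PhiCS, Real.sign_neg, neg_div]

lemma PhiCS_of_pos {y : ℝ} (hy : 0 < y) : PhiCS β y = (1 - y ^ (1 - β)) / (β - 1) := by
  rw [PhiCS, Real.sign_of_pos hy, abs_of_pos hy, one_mul]

lemma PhiCS_lt_of_pos (hβ : 1 < β) {y : ℝ} (hy : 0 < y) : PhiCS β y < 1 / (β - 1) := by
  rw [PhiCS_of_pos hy]
  exact div_lt_div_of_pos_right (by linarith [Real.rpow_pos_of_pos hy (1 - β)]) (by linarith)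

lemma PhiCS_le_PhiCS (hβ : 1 < β) {y z : ℝ} (hy : 0 < y) (hyz : y ≤ z) :
    PhiCS β y ≤ PhiCS β z := by
  rw [PhiCS_of_pos hy, PhiCS_of_pos (hy.trans_le hyz)]
  have : z ^ (1 - β) ≤ y ^ (1 - β) := Real.rpow_le_rpow_of_nonpos hy hyz (by linarith)
  exact div_le_div_of_nonneg_right (by linarith) (by linarith)

end Potential

lemma sum_sum_eq_zero_of_antisymm {ι : Type*} (s : Finset ι) (g : ι → ι → ℝ)
    (hg : ∀ i j, g j i = -g i j) : ∑ i ∈ s, ∑ j ∈ s, g i j = 0 := by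
  have h : ∑ i ∈ s, ∑ j ∈ s, g i j = -∑ i ∈ s, ∑ j ∈ s, g i j :=
    calc ∑ i ∈ s, ∑ j ∈ s, g i j = ∑ j ∈ s, ∑ i ∈ s, -g j i :=
          sum_comm.trans (sum_congr rfl fun j _ => sum_congr rfl fun i _ => hg j i)
      _ = -∑ i ∈ s, ∑ j ∈ s, g i j := by simp only [sum_neg_distrib]
  linarith

lemma sum_sum_erase_eq_sum_sum_compl {ι : Type*} [Fintype ι] [DecidableEq ι]
    (A : Finset ι) (g : ι → ι → ℝ) (hg : ∀ i j, g j i = -g i j) :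
    ∑ i ∈ A, ∑ k ∈ univ.erase i, g i k = ∑ i ∈ A, ∑ k ∈ Aᶜ, g i k := by
  have hdiag : ∀ i, g i i = 0 := fun i => by linarith [hg i i]
  have hsplit : ∀ i, ∑ k ∈ univ.erase i, g i k = ∑ k ∈ A, g i k + ∑ k ∈ Aᶜ, g i k := fun i => by
    rw [sum_add_sum_compl, sum_erase _ (hdiag i)]
  simp only [hsplit, sum_add_distrib, sum_sum_eq_zero_of_antisymm A g hg, zero_add]

lemma pos_of_continuousOn_Ici_of_ne_zero {f : ℝ → ℝ} {a t : ℝ} (hf : ContinuousOn f (Ici a))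
    (ha : 0 < f a) (hne : ∀ s ≥ a, f s ≠ 0) (ht : a ≤ t) : 0 < f t := by
  by_contra! hft
  obtain ⟨s, hs, hfs⟩ :=
    intermediate_value_Icc' ht (hf.mono Icc_subset_Ici_self) ⟨hft, ha.le⟩
  exact hne s hs.1 hfs

lemma nonneg_of_tendsto_of_eventually_hasDerivWithinAt_le {f f' : ℝ → ℝ} {a c ℓ : ℝ}
    (hf : ∀ t ≥ a, HasDerivWithinAt f (f' t) (Ici a) t) (hle : ∀ᶠ t in atTop, f' t ≤ c)
    (hlim : Tendsto f atTop (𝓝 ℓ)) : 0 ≤ c := by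
  by_contra! hc
  obtain ⟨T, hT⟩ := (hle.and (eventually_ge_atTop a)).exists_forall_of_atTop
  have hcont : ContinuousOn f (Ici a) := fun s hs => (hf s hs).continuousWithinAt
  have hline : ∀ s, HasDerivAt (fun t => f T + c * (t - T)) c s := fun s => by
    simpa using (((hasDerivAt_id s).sub_const T).const_mul c).const_add (f T)
  have hbound : ∀ t ≥ T, f t ≤ f T + c * (t - T) := fun t ht =>
    image_le_of_deriv_right_le_deriv_boundary
      (hcont.mono ((Icc_subset_Ici_iff ht).2 (hT T le_rfl).2))
      (fun s hs => (hf s (hT s hs.1).2).mono (Ici_subset_Ici.2 (hT s hs.1).2)) (by simp)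
      (by fun_prop) (fun s _ => (hline s).hasDerivWithinAt) (fun s hs => (hT s hs.1).1)
      ⟨ht, le_rfl⟩
  have hbot : Tendsto (fun t => f T + c * (t - T)) atTop atBot :=
    tendsto_atBot_add_const_left _ _ <|
      (tendsto_atTop_add_const_right _ _ tendsto_id).const_mul_atTop_of_neg hc
  exact not_tendsto_atBot_of_tendsto_nhds hlim
    (tendsto_atBot_mono' atTop ((eventually_ge_atTop T).mono hbound) hbot)

lemma tendsto_sub_of_tendsto_abs_sub {ι : Type*} [LinearOrder ι] {x : ℝ → ι → ℝ}
    (hmono : ∀ t ≥ 0, Monotone (x t))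
    (habs : ∀ i j, ∃ L : ℝ, Tendsto (fun t => |x t i - x t j|) atTop (𝓝 L)) (i j : ι) :
    ∃ L, Tendsto (fun t => x t i - x t j) atTop (𝓝 L) := by
  obtain ⟨L, hL⟩ := habs i j
  rcases le_total i j with hij | hji
  · refine ⟨-L, hL.neg.congr' ?_⟩
    filter_upwards [eventually_ge_atTop 0] with t ht
    rw [abs_of_nonpos (sub_nonpos.2 (hmono t ht hij)), neg_neg]
  · refine ⟨L, hL.congr' ?_⟩
    filter_upwards [eventually_ge_atTop 0] with t ht
    rw [abs_of_nonneg (sub_nonneg.2 (hmono t ht hji))]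

namespace IsCFSol

variable {N : ℕ} {β κ : ℝ} {ν : Fin N → ℝ} {x : ℝ → Fin N → ℝ}

lemma continuousOn (hx : IsCFSol N β κ ν x) (i : Fin N) :
    ContinuousOn (fun t => x t i) (Ici 0) :=
  fun t ht => (hx.2.2 i t ht).continuousWithinAt

lemma strictMono (hx : IsCFSol N β κ ν x) (hx0 : StrictMono (x 0)) {t : ℝ} (ht : 0 ≤ t) :
    StrictMono (x t) := fun i j hij =>
  sub_pos.1 <| pos_of_continuousOn_Ici_of_ne_zero (f := fun s => x s j - x s i)
    ((hx.continuousOn j).sub (hx.continuousOn i))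
    (sub_pos.2 (hx0 hij)) (fun s hs => sub_ne_zero.2 (hx.1 s hs j i hij.ne')) ht

/-- The interactions inside `A` cancel, leaving only those across the cut `(A, Aᶜ)`. -/
lemma hasDerivWithinAt_sum (hx : IsCFSol N β κ ν x) (A : Finset (Fin N)) {t : ℝ} (ht : 0 ≤ t) :
    HasDerivWithinAt (fun s => ∑ i ∈ A, x s i)
      (∑ i ∈ A, ν i + κ / N * ∑ i ∈ A, ∑ k ∈ Aᶜ, PhiCS β (x t k - x t i)) (Ici 0) t := by
  have hsum := HasDerivWithinAt.fun_sum fun i (_ : i ∈ A) => hx.2.2 i t ht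
  rwa [sum_add_distrib, ← mul_sum, sum_sum_erase_eq_sum_sum_compl A _
    fun i k => by rw [← PhiCS_neg, neg_sub]] at hsum

lemma sum_eq_zero (hx : IsCFSol N β κ ν x) (hν : ∑ i, ν i = 0) {t : ℝ} (ht : 0 ≤ t) :
    ∑ i, x t i = 0 := by
  have hderiv : ∀ s ∈ Ico 0 t, HasDerivWithinAt (fun s => ∑ i, x s i) 0 (Ici s) s := by
    intro s hs
    simpa [hν] using (hx.hasDerivWithinAt_sum univ hs.1).mono (Ici_subset_Ici.2 hs.1)
  rw [constant_of_has_deriv_right_zero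
    ((continuousOn_finsetSum _ fun i _ => hx.continuousOn i).mono Icc_subset_Ici_self)
    hderiv t ⟨ht, le_rfl⟩, hx.2.1]

/-- With the centre of mass pinned at `0`, `x_i = (1/N) Σ_j (x_i − x_j)`. -/
lemma tendsto_of_tendsto_sub (hx : IsCFSol N β κ ν x) (hν : ∑ i, ν i = 0)
    (hlim : ∀ i j, ∃ L, Tendsto (fun t => x t i - x t j) atTop (𝓝 L)) (i : Fin N) :
    ∃ ℓ, Tendsto (fun t => x t i) atTop (𝓝 ℓ) := by
  choose L hL using hlim
  refine ⟨(∑ j, L i j) / N, (tendsto_finsetSum _ fun j _ => hL i j).div_const _ |>.congr' ?_⟩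
  filter_upwards [eventually_ge_atTop 0] with t ht
  have hN : (N : ℝ) ≠ 0 := by exact_mod_cast i.pos.ne'
  rw [sum_sub_distrib, hx.sum_eq_zero hν ht, sum_const, card_univ, Fintype.card_fin,
    nsmul_eq_mul, sub_zero, mul_div_cancel_left₀ _ hN]

theorem pos_sum_add_mul_card_mul_card (hx : IsCFSol N β κ ν x) (hβ : 1 < β) (hκ : 0 < κ)
    (hmono : ∀ t ≥ 0, StrictMono (x t)) {ℓ : Fin N → ℝ}
    (hℓ : ∀ i, Tendsto (fun t => x t i) atTop (𝓝 (ℓ i))) {A : Finset (Fin N)}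
    (hcut : ∀ i ∈ A, ∀ k ∉ A, i < k) (hA : A.Nonempty) (hAc : Aᶜ.Nonempty) :
    0 < ∑ i ∈ A, ν i + κ / N * (#A * #Aᶜ / (β - 1)) := by
  have hκN : 0 < κ / N := div_pos hκ (by obtain ⟨i, -⟩ := hA; exact_mod_cast i.pos)
  -- the `+ 1` keeps the comparison point positive even when two particles merge in the limit
  set φ : Fin N → Fin N → ℝ := fun i k => PhiCS β (ℓ k - ℓ i + 1)
  have hgap : ∀ i ∈ A, ∀ k ∈ Aᶜ, ∀ᶠ t in atTop, PhiCS β (x t k - x t i) ≤ φ i k := by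
    intro i hi k hk
    filter_upwards [((hℓ k).sub (hℓ i)).eventually_le_const (lt_add_one _),
      eventually_ge_atTop 0] with t hle ht
    exact PhiCS_le_PhiCS hβ (sub_pos.2 (hmono t ht (hcut i hi k (mem_compl.1 hk)))) hle
  have hφ : ∀ p ∈ A ×ˢ Aᶜ, φ p.1 p.2 < 1 / (β - 1) := by
    rintro ⟨i, k⟩ hik
    obtain ⟨hi, hk⟩ := mem_product.1 hik
    have hle : ℓ i ≤ ℓ k := le_of_tendsto_of_tendsto (hℓ i) (hℓ k) <|
      (eventually_ge_atTop 0).mono fun t ht => (hmono t ht (hcut i hi k (mem_compl.1 hk))).le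
    exact PhiCS_lt_of_pos hβ (by linarith)
  have hflux : 0 ≤ ∑ i ∈ A, ν i + κ / N * ∑ i ∈ A, ∑ k ∈ Aᶜ, φ i k := by
    refine nonneg_of_tendsto_of_eventually_hasDerivWithinAt_le
      (fun t ht => hx.hasDerivWithinAt_sum A ht) ?_ (tendsto_finsetSum A fun i _ => hℓ i)
    filter_upwards [(eventually_all_finset A).2 fun i hi => (eventually_all_finset _).2 (hgap i hi)]
      with t ht
    gcongr with i hi k hk
    exact ht i hi k hk
  have hbound : ∑ i ∈ A, ∑ k ∈ Aᶜ, φ i k < #A * #Aᶜ / (β - 1) := by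
    rw [div_eq_mul_one_div, ← sum_product' (f := φ), ← Nat.cast_mul, ← card_product,
      ← nsmul_eq_mul, ← sum_const]
    exact sum_lt_sum_of_nonempty (hA.product hAc) hφ
  linarith [mul_lt_mul_of_pos_left hbound hκN]

end IsCFSol

lemma kappaC_lt_of_forall_cut {N : ℕ} {β κ : ℝ} {ν : Fin N → ℝ} (hβ : 1 < β) (hκ : 0 < κ)
    (hcut : ∀ m : ℕ, 0 < m → m < N →
      0 < ∑ i ∈ univ.filter (fun i : Fin N => (i : ℕ) < m), ν i + κ / N * (m * (N - m) / (β - 1))) :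
    kappaC N β ν < κ := by
  rcases isEmpty_or_nonempty (Fin (N - 1)) with h | h
  · rwa [kappaC, Real.iSup_of_isEmpty]
  obtain ⟨l, hl⟩ := exists_eq_ciSup_of_finite (f := fun l : Fin (N - 1) =>
    (-((N:ℝ) * (β - 1) * ∑ i : Fin N, if (i:ℕ) < (l:ℕ) + 1 then ν i else 0)) /
      ((((l:ℕ):ℝ) + 1) * ((N:ℝ) - (((l:ℕ):ℝ) + 1))))
  rw [kappaC, ← hl, ← sum_filter]
  have hlN : (l : ℕ) + 1 < N := by omega
  have hpos := hcut ((l : ℕ) + 1) (Nat.succ_pos _) hlN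
  push_cast at hpos
  have hNl : (0 : ℝ) < N - ((l : ℕ) + 1) := sub_pos.2 (by exact_mod_cast hlN)
  have hN : (0 : ℝ) < N := by linarith
  have hβ1 : 0 < β - 1 := sub_pos.2 hβ
  have hscale : N * (β - 1) * (κ / N * (((l : ℕ) + 1) * (N - ((l : ℕ) + 1)) / (β - 1))) =
      κ * (((l : ℕ) + 1) * (N - ((l : ℕ) + 1))) := by
    field_simp
  have := mul_pos (mul_pos hN hβ1) hpos
  rw [mul_add, hscale] at this
  rw [div_lt_iff₀ (by positivity)]
  linarith

theorem stmt13 (N : ℕ) (β κ : ℝ) (hβ : 1 < β) (hκ : 0 < κ)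
    (ν : Fin N → ℝ) (hν : ∑ i, ν i = 0)
    (x : ℝ → Fin N → ℝ) (hx : IsCFSol N β κ ν x)
    (hx0 : StrictMono (x 0))
    (hflock : ∀ i j : Fin N, ∃ L : ℝ, Tendsto (fun t => |x t i - x t j|) atTop (𝓝 L)) :
    kappaC N β ν < κ := by
  have hmono : ∀ t ≥ 0, StrictMono (x t) := fun t ht => hx.strictMono hx0 ht
  choose ℓ hℓ using hx.tendsto_of_tendsto_sub hν
    (tendsto_sub_of_tendsto_abs_sub (fun t ht => (hmono t ht).monotone) hflock)
  refine kappaC_lt_of_forall_cut hβ hκ fun m hm hmN => ?_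
  have hpos := hx.pos_sum_add_mul_card_mul_card hβ hκ hmono hℓ
    (A := univ.filter fun i : Fin N => (i : ℕ) < m)
    (fun i hi k hk => Fin.lt_def.2 (by simp at hi hk; omega))
    ⟨⟨0, by omega⟩, by simpa⟩ ⟨⟨N - 1, by omega⟩, by simp; omega⟩
  rwa [card_compl, Fintype.card_fin, Fin.card_filter_val_lt, min_eq_right hmN.le,
    Nat.cast_sub hmN.le] at hpos
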